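/- arXiv:1711.04756 — 2 statements merged into one kernel-verified Lean document; each statement's English description precedes it below -/
import Mathlib

section
/- Let s₁, s₂ be real numbers with s₁ > 0, s₂ > 0 and s₁ + s₂ > 1, let r₁, r₂ be positive integers, and let k₀ < k₁ < ⋯ < k_{r₂-1} be integers with 0 ≤ k₀ and k_{r₂-1} ≤ r₁ + r₂ - 1. Then the r₂ × r₂ determinant det_{0 ≤ i, j ≤ r₂-1} ( C(r₁, k_j - i) · (s₁ + i)_{k_j - i} / [ (s₁ + s₂ + i + k_j - 1)_{k_j - i} · (s₁ + s₂ + r₁ + 2i)_{k_j - i} ] ), where an entry is taken to be 0 when k_j - i < 0 or k_j - i > r₁, equals ∏_{0 ≤ i < j ≤ r₂-1} (k_j - k_i)(k_i + k_j + s₁ + s₂ - 1) times ∏_{i=0}^{r₂-1} [ (s₁)_{k_i} · Γ(s₁+s₂+r₁+2i-1) · Γ(s₁+s₂+r₁+2i) · (r₁+i)! · Γ(s₁+s₂+k_i-1) ] / [ (s₁)_i · Γ(s₁+s₂+r₁+i-1) · Γ(s₁+s₂+2k_i-1) · k_i! · (r₁+r₂-k_i-1)! · Γ(s₁+s₂+r₁+r₂+k_i-1)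 ]. -/
/-!
Write `X(u) = u (u + s₁ + s₂ - 1)`. Up to a factor depending only on the row `i` and a factor
depending only on the column entry `κ = k_j`, the `(i, j)` entry is
`∏_{i<m<r₂} (X(r₁+m) - X(κ)) · ∏_{m<i} (X(κ) - X(m))`; outside `i ≤ κ ≤ r₁ + i`, where the entry
is padded with `0`, one of these factors is `X(κ) - X(κ)`. The determinant of such a matrix is
given by Krattenthaler's lemma
`det (∏_{i<m<n} (a_m - x_j) · ∏_{m<i} (x_j - b_m)) = ∏_{p<q<n} (a_q - b_p) · ∏_{i<j} (x_j - x_i)`,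
and `X(k_j) - X(k_i) = (k_j - k_i)(k_i + k_j + s₁ + s₂ - 1)`. Krattenthaler's lemma follows by row
reduction: adding row `i+1` to row `i` strips one factor `a` from row `i` at the cost of a scalar
`a_q - b_i`, until only the monic polynomials `∏_{m<i} (x - b_m)` of a Vandermonde determinant
remain.
-/

open Finset

noncomputable section

/-- The Pochhammer symbol `(a)_n = a (a+1) ⋯ (a+n-1)` for real `a`. -/
def poch (a : ℝ) (n : ℕ) : ℝ := Polynomial.eval a (ascPochhammer ℝ n)

/-- The entry `f(s₁,s₂,r,i,j)`, set to `0` when `j - i < 0` or `j - i > r`. -/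
def fEnt (s₁ s₂ : ℝ) (r : ℕ) (i j : ℤ) : ℝ :=
  if 0 ≤ j - i ∧ j - i ≤ (r : ℤ) then
    (r.choose (j - i).toNat : ℝ) * poch (s₁ + i) (j - i).toNat /
      (poch (s₁ + s₂ + i + j - 1) (j - i).toNat * poch (s₁ + s₂ + r + 2 * i) (j - i).toNat)
  else 0

section Krattenthaler

open Matrix Polynomial

variable {R : Type*} [CommRing R]

theorem Matrix.det_eq_of_forall_row_eq_smul_add_succ {n : ℕ}
    {A B : Matrix (Fin (n + 1)) (Fin (n + 1)) R} (c : Fin n → R)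
    (A_last : ∀ j, A (Fin.last n) j = B (Fin.last n) j)
    (A_castSucc : ∀ (i : Fin n) j, A i.castSucc j = B i.castSucc j + c i * A i.succ j) :
    A.det = B.det := by
  have h := det_eq_of_forall_row_eq_smul_add_pred (A := A.submatrix Fin.revPerm Fin.revPerm)
    (B := B.submatrix Fin.revPerm Fin.revPerm) (c ∘ Fin.rev)
    (fun j => by simpa using A_last _)
    (fun i j => by
      simpa [Fin.rev_succ, Fin.rev_castSucc] using A_castSucc (Fin.rev i) (Fin.rev j))
  simpa only [det_submatrix_equiv_self] using h

variable {n : ℕ} (a b : ℕ → R) (x : Fin n → R)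

/-- Stage `t` of the row reduction; stage `0` is Krattenthaler's matrix. -/
def krattenthalerMatrix (t : ℕ) : Matrix (Fin n) (Fin n) R :=
  of fun i j => (∏ m ∈ Ico (i + t + 1) n, (a m - x j)) * ∏ m ∈ range i, (x j - b m)

theorem det_krattenthalerMatrix_of_le {t : ℕ} (ht : n ≤ t + 1) :
    (krattenthalerMatrix a b x t).det = ∏ i, ∏ j ∈ Ioi i, (x j - x i) := by
  nontriviality R
  let p : Fin n → R[X] := fun i => ∏ m ∈ range i, (X - C (b m))
  have hp : krattenthalerMatrix a b x t = (of fun i j => (p j).eval (x i))ᵀ := by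
    ext i j
    simp [krattenthalerMatrix, p, eval_prod, Ico_eq_empty_of_le (show n ≤ i + t + 1 by omega)]
  rw [hp, det_transpose, ← det_eval_matrixOfPolynomials_eq_det_vandermonde x p
    (fun i => by simp [p]) (fun i => monic_prod_of_monic _ _ fun m _ => monic_X_sub_C (b m)),
    det_vandermonde]

theorem det_krattenthalerMatrix_succ (t : ℕ) :
    (krattenthalerMatrix a b x t).det =
      (∏ i : Fin n, if i + t + 1 < n then a (i + t + 1) - b i else 1) *
        (krattenthalerMatrix a b x (t + 1)).det := by
  rcases n with _ | n
  · simp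
  rw [← det_mul_column]
  refine det_eq_of_forall_row_eq_smul_add_succ (fun i => if i + t + 1 < n + 1 then -1 else 0)
    (fun j => ?_) (fun i j => ?_)
  · simp [krattenthalerMatrix, Ico_eq_empty_of_le]
  · simp only [krattenthalerMatrix, of_apply, Fin.val_castSucc, Fin.val_succ]
    split_ifs with h
    · rw [prod_eq_prod_Ico_succ_bot h, prod_range_succ]
      ring_nf
    · simp [Ico_eq_empty_of_le (show n + 1 ≤ i + t + 1 by omega),
        Ico_eq_empty_of_le (show n + 1 ≤ i + (t + 1) + 1 by omega)]

theorem det_krattenthalerMatrix (t : ℕ) :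
    (krattenthalerMatrix a b x t).det =
      (∏ i : Fin n, ∏ q ∈ Ico (i + t + 1) n, (a q - b i)) * ∏ i, ∏ j ∈ Ioi i, (x j - x i) := by
  by_cases ht : n ≤ t + 1
  · have h (i : Fin n) : Ico (i + t + 1) n = ∅ := Ico_eq_empty_of_le (by omega)
    simp [det_krattenthalerMatrix_of_le a b x ht, h]
  · rw [det_krattenthalerMatrix_succ, det_krattenthalerMatrix (t + 1), ← mul_assoc,
      ← prod_mul_distrib]
    congr 1
    refine prod_congr rfl fun i _ => ?_
    split_ifs with h
    · rw [prod_eq_prod_Ico_succ_bot h]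
      ring_nf
    · rw [Ico_eq_empty_of_le (by omega), Ico_eq_empty_of_le (by omega), prod_empty, one_mul]
termination_by n - t

theorem det_krattenthalerMatrix_zero :
    (krattenthalerMatrix a b x 0).det =
      (∏ q : Fin n, ∏ p ∈ range q, (a q - b p)) * ∏ i, ∏ j ∈ Ioi i, (x j - x i) := by
  rw [det_krattenthalerMatrix]
  congr 1
  rw [Fin.prod_univ_eq_prod_range (fun i => ∏ q ∈ Ico (i + 0 + 1) n, (a q - b i)),
    Fin.prod_univ_eq_prod_range (fun q => ∏ p ∈ range q, (a q - b p))]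
  exact prod_comm' fun p q => by simp only [mem_range, mem_Ico]; omega

end Krattenthaler

theorem Finset.prod_filter_fst_lt_snd {α M : Type*} [Fintype α] [LinearOrder α]
    [LocallyFiniteOrderTop α] [CommMonoid M] (f : α × α → M) :
    ∏ p ∈ univ.filter (fun p : α × α => p.1 < p.2), f p = ∏ i, ∏ j ∈ Ioi i, f (i, j) := by
  rw [prod_filter, ← univ_product_univ, prod_product]
  refine prod_congr rfl fun i _ => ?_
  rw [← prod_filter, filter_lt_eq_Ioi]

theorem poch_succ (a : ℝ) (n : ℕ) : poch a (n + 1) = poch a n * (a + n) :=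
  ascPochhammer_succ_eval n a

theorem poch_eq_prod (a : ℝ) (n : ℕ) : poch a n = ∏ m ∈ range n, (a + m) := by
  induction n with
  | zero => simp [poch]
  | succ n ih => rw [poch_succ, ih, prod_range_succ]

theorem poch_eq_Gamma_div {a : ℝ} (ha : 0 < a) (n : ℕ) :
    poch a n = Real.Gamma (a + n) / Real.Gamma a := by
  induction n with
  | zero => simp [poch, (Real.Gamma_pos_of_pos ha).ne']
  | succ n ih =>
    rw [poch_succ, ih, Nat.cast_succ, ← add_assoc, Real.Gamma_add_one (by positivity)]
    ring

def shiftedSquare (c u : ℝ) : ℝ := u * (u + c)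

theorem shiftedSquare_sub (c u v : ℝ) :
    shiftedSquare c u - shiftedSquare c v = (u - v) * (u + v + c) := by
  unfold shiftedSquare; ring

theorem prod_Ico_shiftedSquare_sub (c u v : ℝ) (l n : ℕ) :
    ∏ m ∈ Ico l n, (shiftedSquare c (u + m) - shiftedSquare c v) =
      poch (u + l - v) (n - l) * poch (u + l + v + c) (n - l) := by
  simp only [prod_Ico_eq_prod_range, shiftedSquare_sub, prod_mul_distrib, poch_eq_prod]
  congr 1 <;> refine prod_congr rfl fun m _ => ?_ <;> push_cast <;> ring

theorem prod_range_shiftedSquare_sub (c v : ℝ) (i : ℕ) :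
    ∏ m ∈ range i, (shiftedSquare c v - shiftedSquare c m) =
      poch (v - i + 1) i * poch (v + c) i := by
  simp only [shiftedSquare_sub, prod_mul_distrib, poch, ← descPochhammer_eval_eq_ascPochhammer,
    descPochhammer_eval_eq_prod_range]
  congr 1
  rw [← poch, poch_eq_prod]
  exact prod_congr rfl fun m _ => by ring

def rowFactor (s₁ s₂ : ℝ) (r₁ i : ℕ) : ℝ :=
  r₁.factorial * Real.Gamma (s₁ + s₂ + r₁ + 2 * i) / poch s₁ i

def colFactor (s₁ s₂ : ℝ) (r₁ r₂ κ : ℕ) : ℝ :=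
  poch s₁ κ * Real.Gamma (s₁ + s₂ + κ - 1) /
    (Real.Gamma (s₁ + s₂ + 2 * κ - 1) * Real.Gamma (κ + 1) * Real.Gamma ((r₁ : ℝ) + r₂ - κ) *
      Real.Gamma (s₁ + s₂ + r₁ + r₂ + κ - 1))

theorem fEnt_eq_mul_prod {s₁ s₂ : ℝ} (hs₁ : 0 < s₁) (hs : 1 < s₁ + s₂) {r₁ n i κ : ℕ}
    (hi : i < n) (hκ : κ < r₁ + n) :
    fEnt s₁ s₂ r₁ i κ = rowFactor s₁ s₂ r₁ i * (colFactor s₁ s₂ r₁ n κ *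
      ((∏ m ∈ Ico (i + 1) n,
          (shiftedSquare (s₁ + s₂ - 1) (r₁ + m) - shiftedSquare (s₁ + s₂ - 1) κ)) *
        ∏ m ∈ range i, (shiftedSquare (s₁ + s₂ - 1) κ - shiftedSquare (s₁ + s₂ - 1) m))) := by
  rcases lt_or_ge κ i with hκi | hiκ
  · rw [fEnt, if_neg (by omega), prod_eq_zero (mem_range.2 hκi) (sub_self _)]
    ring
  rcases lt_or_ge (r₁ + i) κ with hκr | hκr
  · have hm : κ - r₁ ∈ Ico (i + 1) n := mem_Ico.2 ⟨by omega, by omega⟩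
    rw [fEnt, if_neg (by omega), prod_eq_zero hm (by rw [Nat.cast_sub (by omega)]; ring_nf)]
    ring
  -- After these substitutions every argument of `Γ` and `poch` is visibly positive, so all of them
  -- can be turned into quotients of `Γ` values that `field_simp` cancels.
  obtain ⟨d, rfl⟩ := Nat.exists_eq_add_of_le hiκ
  obtain ⟨e, rfl⟩ : ∃ e, r₁ = d + e := ⟨r₁ - d, by omega⟩
  obtain ⟨L, rfl⟩ : ∃ L, n = i + 1 + L := ⟨n - (i + 1), by omega⟩
  obtain ⟨c, hc, rfl⟩ : ∃ c, 0 < c ∧ s₂ = c + 1 - s₁ := ⟨s₁ + s₂ - 1, by linarith, by ring⟩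
  have hfEnt : fEnt s₁ (c + 1 - s₁) (d + e) i (i + d : ℕ) = ((d + e).choose d : ℝ) *
      poch (s₁ + i) d / (poch (c + i + (i + d)) d * poch (c + 1 + (d + e) + 2 * i) d) := by
    have hdiff : ((i + d : ℕ) : ℤ) - (i : ℕ) = d := by push_cast; ring
    rw [fEnt, if_pos (by omega)]
    simp only [hdiff, Int.toNat_natCast]
    push_cast
    ring_nf
  rw [hfEnt, prod_Ico_shiftedSquare_sub, prod_range_shiftedSquare_sub, rowFactor, colFactor,
    Nat.cast_choose ℝ (Nat.le_add_right d e), add_tsub_cancel_left, add_tsub_cancel_left]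
  simp only [← Real.Gamma_nat_eq_factorial]
  push_cast
  ring_nf
  simp (disch := positivity) only [poch_eq_Gamma_div, Nat.cast_add]
  ring_nf
  field_simp

theorem rowFactor_mul_prod {s₁ s₂ : ℝ} (hs₁ : 0 < s₁) (hs : 1 < s₁ + s₂) (r₁ i : ℕ) :
    rowFactor s₁ s₂ r₁ i *
        ∏ p ∈ range i, (shiftedSquare (s₁ + s₂ - 1) (r₁ + i) - shiftedSquare (s₁ + s₂ - 1) p) =
      Real.Gamma (s₁ + s₂ + r₁ + 2 * i - 1) * Real.Gamma (s₁ + s₂ + r₁ + 2 * i) *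
          (r₁ + i).factorial / (poch s₁ i * Real.Gamma (s₁ + s₂ + r₁ + i - 1)) := by
  obtain ⟨c, hc, rfl⟩ : ∃ c, 0 < c ∧ s₂ = c + 1 - s₁ := ⟨s₁ + s₂ - 1, by linarith, by ring⟩
  rw [prod_range_shiftedSquare_sub, rowFactor]
  simp only [← Real.Gamma_nat_eq_factorial]
  push_cast
  ring_nf
  simp (disch := positivity) only [poch_eq_Gamma_div]
  ring_nf
  field_simp

theorem rowFactor_mul_prod_mul_colFactor {s₁ s₂ : ℝ} (hs₁ : 0 < s₁) (hs : 1 < s₁ + s₂)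
    (r₁ r₂ i κ : ℕ) :
    rowFactor s₁ s₂ r₁ i *
        (∏ p ∈ range i, (shiftedSquare (s₁ + s₂ - 1) (r₁ + i) - shiftedSquare (s₁ + s₂ - 1) p)) *
        colFactor s₁ s₂ r₁ r₂ κ =
      poch s₁ κ * Real.Gamma (s₁ + s₂ + r₁ + 2 * i - 1) * Real.Gamma (s₁ + s₂ + r₁ + 2 * i) *
          (r₁ + i).factorial * Real.Gamma (s₁ + s₂ + κ - 1) /
        (poch s₁ i * Real.Gamma (s₁ + s₂ + r₁ + i - 1) * Real.Gamma (s₁ + s₂ + 2 * κ - 1) *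
          Real.Gamma (κ + 1) * Real.Gamma ((r₁ : ℝ) + r₂ - κ) *
          Real.Gamma (s₁ + s₂ + r₁ + r₂ + κ - 1)) := by
  rw [rowFactor_mul_prod hs₁ hs, colFactor]
  ring

open Real in
theorem det_lemma_one_general (s₁ s₂ : ℝ) (hs₁ : 0 < s₁) (hs : 1 < s₁ + s₂)
    (r₁ r₂ : ℕ) (k : Fin r₂ → ℤ)
    (hk0 : ∀ i, 0 ≤ k i) (hk1 : ∀ i, k i ≤ (r₁ : ℤ) + r₂ - 1) :
    (Matrix.det (fun i j : Fin r₂ => fEnt s₁ s₂ r₁ (i : ℕ) (k j))) =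
      (∏ p ∈ Finset.univ.filter (fun p : Fin r₂ × Fin r₂ => p.1 < p.2),
        (((k p.2 : ℝ) - (k p.1 : ℝ)) * ((k p.1 : ℝ) + (k p.2 : ℝ) + s₁ + s₂ - 1))) *
      ∏ i : Fin r₂,
        (poch s₁ (k i).toNat * Real.Gamma (s₁ + s₂ + r₁ + 2 * (i : ℕ) - 1) *
          Real.Gamma (s₁ + s₂ + r₁ + 2 * (i : ℕ)) * (r₁ + (i : ℕ)).factorial *
          Real.Gamma (s₁ + s₂ + (k i : ℝ) - 1)) /
        (poch s₁ (i : ℕ) * Real.Gamma (s₁ + s₂ + r₁ + (i : ℕ) - 1) *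
          Real.Gamma (s₁ + s₂ + 2 * (k i : ℝ) - 1) * Real.Gamma ((k i : ℝ) + 1) *
          Real.Gamma ((r₁ : ℝ) + r₂ - (k i : ℝ)) *
          Real.Gamma (s₁ + s₂ + r₁ + r₂ + (k i : ℝ) - 1)) := by
  lift k to Fin r₂ → ℕ using hk0
  simp only [Int.toNat_natCast, Int.cast_natCast] at hk1 ⊢
  set c := s₁ + s₂ - 1
  have hM : (fun i j : Fin r₂ => fEnt s₁ s₂ r₁ (i : ℕ) (k j)) =
      Matrix.diagonal (fun i : Fin r₂ => rowFactor s₁ s₂ r₁ i) *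
        krattenthalerMatrix (fun m => shiftedSquare c (r₁ + m)) (fun m => shiftedSquare c m)
          (fun j => shiftedSquare c (k j)) 0 *
        Matrix.diagonal (fun j => colFactor s₁ s₂ r₁ r₂ (k j)) := by
    ext i j
    rw [fEnt_eq_mul_prod hs₁ hs i.isLt (by have := hk1 j; omega)]
    simp only [krattenthalerMatrix, add_zero, Matrix.mul_diagonal, Matrix.diagonal_mul,
      Matrix.of_apply]
    ring
  rw [hM, Matrix.det_mul, Matrix.det_mul, Matrix.det_diagonal, Matrix.det_diagonal,
    det_krattenthalerMatrix_zero, prod_filter_fst_lt_snd]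
  have hV : ∏ i, ∏ j ∈ Ioi i, (shiftedSquare c (k j) - shiftedSquare c (k i)) =
      ∏ i, ∏ j ∈ Ioi i, (((k j : ℝ) - k i) * ((k i : ℝ) + k j + s₁ + s₂ - 1)) :=
    prod_congr rfl fun i _ => prod_congr rfl fun j _ => by rw [shiftedSquare_sub]; ring
  rw [hV, prod_congr rfl fun (i : Fin r₂) _ =>
      (rowFactor_mul_prod_mul_colFactor hs₁ hs r₁ r₂ i (k i)).symm,
    prod_mul_distrib, prod_mul_distrib]
  ring

open Real in
theorem det_lemma_one (s₁ s₂ : ℝ) (hs₁ : 0 < s₁) (hs₂ : 0 < s₂) (hs : 1 < s₁ + s₂)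
    (r₁ r₂ : ℕ) (hr₁ : 0 < r₁) (hr₂ : 0 < r₂) (k : Fin r₂ → ℤ) (hk : StrictMono k)
    (hk0 : ∀ i, 0 ≤ k i) (hk1 : ∀ i, k i ≤ (r₁ : ℤ) + r₂ - 1) :
    (Matrix.det (fun i j : Fin r₂ => fEnt s₁ s₂ r₁ (i : ℕ) (k j))) =
      (∏ p ∈ Finset.univ.filter (fun p : Fin r₂ × Fin r₂ => p.1 < p.2),
        (((k p.2 : ℝ) - (k p.1 : ℝ)) * ((k p.1 : ℝ) + (k p.2 : ℝ) + s₁ + s₂ - 1))) *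
      ∏ i : Fin r₂,
        (poch s₁ (k i).toNat * Real.Gamma (s₁ + s₂ + r₁ + 2 * (i : ℕ) - 1) *
          Real.Gamma (s₁ + s₂ + r₁ + 2 * (i : ℕ)) * (r₁ + (i : ℕ)).factorial *
          Real.Gamma (s₁ + s₂ + (k i : ℝ) - 1)) /
        (poch s₁ (i : ℕ) * Real.Gamma (s₁ + s₂ + r₁ + (i : ℕ) - 1) *
          Real.Gamma (s₁ + s₂ + 2 * (k i : ℝ) - 1) * Real.Gamma ((k i : ℝ) + 1) *
          Real.Gamma ((r₁ : ℝ) + r₂ - (k i : ℝ)) *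
          Real.Gamma (s₁ + s₂ + r₁ + r₂ + (k i : ℝ) - 1)) :=
  det_lemma_one_general s₁ s₂ hs₁ hs r₁ r₂ k hk0 hk1
end
end

section
/- Let α, β, γ > -1 and let n ≥ 2 be an integer. Let P be a real polynomial in x, y of total degree n such that ⟨P, q⟩_{α,β,γ} = 0 for every real polynomial q of total degree ≤ n - 1. Then: ⟨∂₁ P, q⟩_{α+1,β,γ+1} = 0 for every real polynomial q of total degree ≤ n - 2; ⟨∂₂ P, q⟩_{α,β+1,γ+1} = 0 for every real polynomial q of total degree ≤ n - 2; and ⟨∂₃ P, q⟩_{α+1,β+1,γ} = 0 for every real polynomial q of total degree ≤ n - 2. -/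
open MeasureTheory Real Function

noncomputable section

/-- The closed triangle. -/
def Tri : Set (ℝ × ℝ) := {p | 0 ≤ p.1 ∧ 0 ≤ p.2 ∧ p.1 + p.2 ≤ 1}

/-- The interior of the triangle. -/
def TriInt : Set (ℝ × ℝ) := {p | 0 < p.1 ∧ 0 < p.2 ∧ p.1 + p.2 < 1}

/-- The Jacobi weight on the triangle. -/
def wt (α β γ : ℝ) (x y : ℝ) : ℝ := x ^ α * y ^ β * (1 - x - y) ^ γ

/-- The normalizing constant. -/
def normConst (α β γ : ℝ) : ℝ :=
  Real.Gamma (α + β + γ + 3) / (Real.Gamma (α + 1) * Real.Gamma (β + 1) * Real.Gamma (γ + 1))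

/-- The weighted `L²` norm on the triangle. -/
def wNorm (α β γ : ℝ) (f : ℝ → ℝ → ℝ) : ℝ :=
  Real.sqrt (normConst α β γ * ∫ p in Tri, (f p.1 p.2) ^ 2 * wt α β γ p.1 p.2)

/-- Membership in `L²(ϖ_{α,β,γ})`. -/
def MemL2 (α β γ : ℝ) (f : ℝ → ℝ → ℝ) : Prop :=
  IntegrableOn (fun p : ℝ × ℝ => (f p.1 p.2) ^ 2 * wt α β γ p.1 p.2) Tri volume

/-- Partial derivative in the first variable. -/
def D1 (f : ℝ → ℝ → ℝ) : ℝ → ℝ → ℝ := fun x y => deriv (fun t => f t y) x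

/-- Partial derivative in the second variable. -/
def D2 (f : ℝ → ℝ → ℝ) : ℝ → ℝ → ℝ := fun x y => deriv (fun t => f x t) y

/-- `∂₃ = ∂₂ - ∂₁`. -/
def D3 (f : ℝ → ℝ → ℝ) : ℝ → ℝ → ℝ := fun x y => D2 f x y - D1 f x y

/-- The three directional derivative operators. -/
def pD : Fin 3 → (ℝ → ℝ → ℝ) → (ℝ → ℝ → ℝ)
  | 0 => D1
  | 1 => D2
  | 2 => D3

/-- The weights `φ_i`. -/
def phi : Fin 3 → ℝ → ℝ → ℝ
  | 0 => fun x y => Real.sqrt (x * (1 - x - y))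
  | 1 => fun x y => Real.sqrt (y * (1 - x - y))
  | 2 => fun x y => Real.sqrt (x * y)

/-- The Sobolev space `W²_r(ϖ_{α,β,γ})`. -/
def MemW2 (r : ℕ) (α β γ : ℝ) (f : ℝ → ℝ → ℝ) : Prop :=
  MemL2 α β γ f ∧ ContDiffOn ℝ r (uncurry f) TriInt ∧
    ∀ i : Fin 3, MemL2 α β γ (fun x y => phi i x y ^ r * (pD i)^[r] f x y)

/-- Evaluation of a bivariate polynomial. -/
def pEval (p : MvPolynomial (Fin 2) ℝ) (x y : ℝ) : ℝ := MvPolynomial.eval ![x, y] p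

/-- The error of best weighted `L²` approximation by polynomials of total degree at most `n`. -/
def bestE (α β γ : ℝ) (n : ℕ) (f : ℝ → ℝ → ℝ) : ℝ :=
  sInf {e | ∃ p : MvPolynomial (Fin 2) ℝ, p.totalDegree ≤ n ∧
    e = wNorm α β γ (fun x y => f x y - pEval p x y)}

/-- The weighted inner product on the triangle. -/
def wInner (α β γ : ℝ) (f g : ℝ → ℝ → ℝ) : ℝ :=
  normConst α β γ * ∫ p in Tri, f p.1 p.2 * g p.1 p.2 * wt α β γ p.1 p.2

/-!
Integrating by parts along a direction parallel to an edge of the triangle moves the derivative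
from `P` onto `q` and onto the weight. Raising by one the exponents of the two barycentric
coordinates that vanish at the ends of that direction kills the boundary terms and makes the
derivative of the weight a polynomial multiple of `ϖ_{α,β,γ}`; for `∂₁`,
`∫ ∂₁P · q · ϖ_{α+1,β,γ+1} = ∫ P · R · ϖ_{α,β,γ}` with
`R = (γ+1) x q - (α+1)(1-x-y) q - x(1-x-y) ∂₁q` of degree at most `deg q + 1 ≤ n - 1`.

The integration by parts is verified on monomials rather than analytically: every moment
`∫ x^i y^j ϖ_{a,b,c}` is the Dirichlet integral `Γ(a+i+1) Γ(b+j+1) Γ(c+1) / Γ(a+b+c+i+j+3)`,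
computed by Fubini from two Beta integrals, and the identity reduces to `Γ(s+1) = s Γ(s)`.
-/

lemma rpow_add_natCast_of_nonneg {x a : ℝ} (hx : 0 ≤ x) (ha : -1 < a) (n : ℕ) :
    x ^ (a + n) = x ^ a * x ^ n := by
  rcases Nat.eq_zero_or_pos n with rfl | hn
  · simp
  · have hn' : (1 : ℝ) ≤ n := by exact_mod_cast hn
    exact Real.rpow_add_natCast' hx (by linarith)

section BetaIntegral

open Set intervalIntegral

lemma ofReal_rpow_mul_one_sub_rpow {b c t : ℝ} (ht : t ∈ Icc (0 : ℝ) 1) :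
    ((t ^ b * (1 - t) ^ c : ℝ) : ℂ)
      = (t : ℂ) ^ ((b + 1 : ℝ) - 1 : ℂ) * (1 - (t : ℂ)) ^ ((c + 1 : ℝ) - 1 : ℂ) := by
  push_cast
  rw [add_sub_cancel_right, add_sub_cancel_right, Complex.ofReal_cpow ht.1,
    Complex.ofReal_cpow (sub_nonneg.2 ht.2), Complex.ofReal_sub, Complex.ofReal_one]

lemma intervalIntegrable_rpow_mul_one_sub_rpow {b c : ℝ} (hb : -1 < b) (hc : -1 < c) :
    IntervalIntegrable (fun t : ℝ => t ^ b * (1 - t) ^ c) volume 0 1 := by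
  have h := Complex.betaIntegral_convergent (u := (b + 1 : ℝ)) (v := (c + 1 : ℝ))
    (by rw [Complex.ofReal_re]; linarith) (by rw [Complex.ofReal_re]; linarith)
  rw [intervalIntegrable_iff_integrableOn_Ioc_of_le zero_le_one] at h ⊢
  refine IntegrableOn.congr_fun (Integrable.re h) (fun t ht => ?_) measurableSet_Ioc
  rw [← ofReal_rpow_mul_one_sub_rpow (Ioc_subset_Icc_self ht)]
  rfl

lemma integral_rpow_mul_one_sub_rpow {b c : ℝ} (hb : -1 < b) (hc : -1 < c) :
    ∫ t in (0 : ℝ)..1, t ^ b * (1 - t) ^ c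
      = Real.Gamma (b + 1) * Real.Gamma (c + 1) / Real.Gamma (b + c + 2) := by
  apply Complex.ofReal_injective
  rw [← intervalIntegral.integral_ofReal,
    integral_congr (g := fun t : ℝ => (t : ℂ) ^ ((b + 1 : ℝ) - 1 : ℂ)
      * (1 - (t : ℂ)) ^ ((c + 1 : ℝ) - 1 : ℂ))
      (fun t ht => ofReal_rpow_mul_one_sub_rpow (by rwa [uIcc_of_le zero_le_one] at ht)),
    ← Complex.betaIntegral,
    Complex.betaIntegral_eq_Gamma_mul_div _ _ (by rw [Complex.ofReal_re]; linarith)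
      (by rw [Complex.ofReal_re]; linarith)]
  push_cast [← Complex.Gamma_ofReal]
  ring_nf

lemma rpow_mul_sub_rpow_eq_scaled {b c T y : ℝ} (hT : 0 < T) (hy : y ∈ Icc 0 T) :
    y ^ b * (T - y) ^ c = T ^ (b + c) * ((T⁻¹ * y) ^ b * (1 - T⁻¹ * y) ^ c) := by
  have hsub : 1 - T⁻¹ * y = T⁻¹ * (T - y) := by field_simp
  rw [hsub, Real.mul_rpow (by positivity) hy.1, Real.mul_rpow (by positivity) (by linarith [hy.2]),
    Real.inv_rpow hT.le, Real.inv_rpow hT.le, Real.rpow_add hT]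
  have := Real.rpow_pos_of_pos hT b
  have := Real.rpow_pos_of_pos hT c
  field_simp

lemma intervalIntegrable_rpow_mul_sub_rpow {b c T : ℝ} (hb : -1 < b) (hc : -1 < c) (hT : 0 < T) :
    IntervalIntegrable (fun y : ℝ => y ^ b * (T - y) ^ c) volume 0 T := by
  have h := ((intervalIntegrable_rpow_mul_one_sub_rpow hb hc).comp_mul_left
    (c := T⁻¹)).const_mul (T ^ (b + c))
  rw [zero_div, one_div, inv_inv] at h
  refine h.congr fun y hy => (rpow_mul_sub_rpow_eq_scaled hT ?_).symm
  rw [uIoc_of_le hT.le] at hy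
  exact Ioc_subset_Icc_self hy

lemma integral_rpow_mul_sub_rpow {b c T : ℝ} (hb : -1 < b) (hc : -1 < c) (hT : 0 < T) :
    ∫ y in (0 : ℝ)..T, y ^ b * (T - y) ^ c
      = T ^ (b + c + 1) * (Real.Gamma (b + 1) * Real.Gamma (c + 1) / Real.Gamma (b + c + 2)) := by
  rw [integral_congr fun y hy => rpow_mul_sub_rpow_eq_scaled hT
      (by rwa [uIcc_of_le hT.le] at hy), intervalIntegral.integral_const_mul,
    integral_comp_mul_left (fun t => t ^ b * (1 - t) ^ c) (inv_ne_zero hT.ne'), mul_zero,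
    inv_mul_cancel₀ hT.ne', integral_rpow_mul_one_sub_rpow hb hc, inv_inv, smul_eq_mul,
    Real.rpow_add_one hT.ne']
  ring

lemma integrable_indicator_Icc_rpow_mul_sub_rpow {b c T : ℝ} (hb : -1 < b) (hc : -1 < c)
    (hT : 0 < T) : Integrable ((Icc 0 T).indicator fun y : ℝ => y ^ b * (T - y) ^ c) := by
  rw [integrable_indicator_iff measurableSet_Icc, integrableOn_Icc_iff_integrableOn_Ioc,
    ← intervalIntegrable_iff_integrableOn_Ioc_of_le hT.le]
  exact intervalIntegrable_rpow_mul_sub_rpow hb hc hT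

lemma integral_indicator_Icc_rpow_mul_sub_rpow {b c T : ℝ} (hb : -1 < b) (hc : -1 < c)
    (hT : 0 < T) : ∫ y, (Icc 0 T).indicator (fun y : ℝ => y ^ b * (T - y) ^ c) y
      = T ^ (b + c + 1) * (Real.Gamma (b + 1) * Real.Gamma (c + 1) / Real.Gamma (b + c + 2)) := by
  rw [MeasureTheory.integral_indicator measurableSet_Icc, integral_Icc_eq_integral_Ioc,
    ← intervalIntegral.integral_of_le hT.le, integral_rpow_mul_sub_rpow hb hc hT]

end BetaIntegral

section Triangle

open Set

lemma isClosed_Tri : IsClosed Tri :=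
  (isClosed_le continuous_const continuous_fst).inter
    ((isClosed_le continuous_const continuous_snd).inter
      (isClosed_le (continuous_fst.add continuous_snd) continuous_const))

lemma isCompact_Tri : IsCompact Tri := by
  refine (isCompact_Icc (a := ((0 : ℝ), (0 : ℝ))) (b := (1, 1))).of_isClosed_subset
    isClosed_Tri ?_
  rintro ⟨x, y⟩ ⟨hx, hy, hxy⟩
  exact ⟨⟨hx, hy⟩, ⟨by dsimp at *; linarith, by dsimp at *; linarith⟩⟩

lemma measurableSet_Tri : MeasurableSet Tri := isClosed_Tri.measurableSet

lemma mk_mem_Tri_iff {x y : ℝ} : (x, y) ∈ Tri ↔ x ∈ Icc 0 1 ∧ y ∈ Icc 0 (1 - x) := by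
  simp only [Tri, mem_Icc]
  exact ⟨fun ⟨hx, hy, hxy⟩ => ⟨⟨hx, by linarith⟩, hy, by linarith⟩,
    fun ⟨⟨hx, _⟩, hy, hxy⟩ => ⟨hx, hy, by linarith⟩⟩

lemma indicator_Tri_wt (a b c x y : ℝ) :
    Tri.indicator (fun z => wt a b c z.1 z.2) (x, y)
      = (Icc 0 1).indicator (· ^ a) x
        * (Icc 0 (1 - x)).indicator (fun y => y ^ b * (1 - x - y) ^ c) y := by
  by_cases hx : x ∈ Icc (0 : ℝ) 1 <;> by_cases hy : y ∈ Icc 0 (1 - x) <;>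
    simp [mk_mem_Tri_iff, hx, hy, wt, mul_assoc]

lemma wt_nonneg {a b c : ℝ} {z : ℝ × ℝ} (hz : z ∈ Tri) : 0 ≤ wt a b c z.1 z.2 := by
  obtain ⟨hx, hy, hxy⟩ := hz
  have hw : 0 ≤ 1 - z.1 - z.2 := by linarith
  unfold wt
  positivity

lemma integrable_indicator_Tri_wt_slice {a b c x : ℝ} (hb : -1 < b) (hc : -1 < c) (hx : x ≠ 1) :
    Integrable fun y => Tri.indicator (fun z => wt a b c z.1 z.2) (x, y) := by
  simp only [indicator_Tri_wt]
  by_cases hx' : x ∈ Icc (0 : ℝ) 1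
  · exact (integrable_indicator_Icc_rpow_mul_sub_rpow hb hc
      (sub_pos.2 (lt_of_le_of_ne hx'.2 hx))).const_mul _
  · simp [hx']

-- At `x = 1` the slice is null, but the right side is `Γ(b+1)Γ(c+1)/Γ(b+c+2)` when
-- `b + c + 1 = 0`.
lemma integral_indicator_Tri_wt_slice {a b c x : ℝ} (hb : -1 < b) (hc : -1 < c) (hx : x ≠ 1) :
    ∫ y, Tri.indicator (fun z => wt a b c z.1 z.2) (x, y)
      = (Icc 0 1).indicator (fun x => x ^ a * (1 - x) ^ (b + c + 1)) x
        * (Real.Gamma (b + 1) * Real.Gamma (c + 1) / Real.Gamma (b + c + 2)) := by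
  simp only [indicator_Tri_wt]
  by_cases hx' : x ∈ Icc (0 : ℝ) 1
  · rw [integral_const_mul, integral_indicator_Icc_rpow_mul_sub_rpow hb hc
      (sub_pos.2 (lt_of_le_of_ne hx'.2 hx)), indicator_of_mem hx', indicator_of_mem hx', mul_assoc]
  · simp [hx']

end Triangle

section Dirichlet

variable {a b c : ℝ}

lemma integral_indicator_Tri_wt_slice_ae (hb : -1 < b) (hc : -1 < c) :
    (fun x => ∫ y, Tri.indicator (fun z => wt a b c z.1 z.2) (x, y)) =ᵐ[volume]
      fun x => (Set.Icc 0 1).indicator (fun x : ℝ => x ^ a * (1 - x) ^ (b + c + 1)) x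
        * (Real.Gamma (b + 1) * Real.Gamma (c + 1) / Real.Gamma (b + c + 2)) :=
  (volume.ae_ne 1).mono fun _ hx => integral_indicator_Tri_wt_slice hb hc hx

lemma integrable_indicator_Tri_wt (ha : -1 < a) (hb : -1 < b) (hc : -1 < c) :
    Integrable (Tri.indicator fun z : ℝ × ℝ => wt a b c z.1 z.2) := by
  rw [Measure.volume_eq_prod, integrable_prod_iff
    (Measurable.indicator (by unfold wt; fun_prop) measurableSet_Tri).aestronglyMeasurable]
  refine ⟨(volume.ae_ne 1).mono fun x hx => integrable_indicator_Tri_wt_slice hb hc hx, ?_⟩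
  simp only [Real.norm_of_nonneg (Set.indicator_nonneg (fun z hz => wt_nonneg hz) _)]
  exact ((integrable_indicator_Icc_rpow_mul_sub_rpow ha (by linarith) one_pos).mul_const _).congr
    (integral_indicator_Tri_wt_slice_ae hb hc).symm

lemma integrableOn_wt_Tri (ha : -1 < a) (hb : -1 < b) (hc : -1 < c) :
    IntegrableOn (fun z : ℝ × ℝ => wt a b c z.1 z.2) Tri :=
  (integrable_indicator_iff measurableSet_Tri).1 (integrable_indicator_Tri_wt ha hb hc)

lemma integral_wt_Tri (ha : -1 < a) (hb : -1 < b) (hc : -1 < c) :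
    ∫ z in Tri, wt a b c z.1 z.2 = (normConst a b c)⁻¹ := by
  have hΓ : Real.Gamma (b + c + 2) ≠ 0 := (Real.Gamma_pos_of_pos (by linarith)).ne'
  rw [← integral_indicator measurableSet_Tri, Measure.volume_eq_prod,
    integral_prod _
      (by rw [← Measure.volume_eq_prod]; exact integrable_indicator_Tri_wt ha hb hc),
    integral_congr_ae (integral_indicator_Tri_wt_slice_ae hb hc), integral_mul_const,
    integral_indicator_Icc_rpow_mul_sub_rpow ha (by linarith) one_pos, Real.one_rpow, one_mul,
    normConst, inv_div, show b + c + 1 + 1 = b + c + 2 by ring,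
    show a + (b + c + 1) + 2 = a + b + c + 3 by ring]
  field_simp

end Dirichlet

open MvPolynomial

lemma pEval_monomial (s : Fin 2 →₀ ℕ) (r x y : ℝ) :
    pEval (monomial s r) x y = r * (x ^ s 0 * y ^ s 1) := by
  rw [pEval, eval_monomial, Finsupp.prod_fintype _ _ fun _ => pow_zero _, Fin.prod_univ_two]
  rfl

lemma continuous_pEval (p : MvPolynomial (Fin 2) ℝ) :
    Continuous fun z : ℝ × ℝ => pEval p z.1 z.2 := by
  refine (MvPolynomial.continuous_eval p).comp (continuous_pi fun i => ?_)
  fin_cases i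
  exacts [continuous_fst, continuous_snd]

def triIntegral (a b c : ℝ) (p : MvPolynomial (Fin 2) ℝ) : ℝ :=
  ∫ z in Tri, pEval p z.1 z.2 * wt a b c z.1 z.2

lemma wInner_pEval (a b c : ℝ) (p q : MvPolynomial (Fin 2) ℝ) :
    wInner a b c (pEval p) (pEval q) = normConst a b c * triIntegral a b c (p * q) := by
  simp only [wInner, triIntegral, pEval, map_mul]

section triIntegral

variable {a b c : ℝ}

lemma integrableOn_pEval_mul_wt (ha : -1 < a) (hb : -1 < b) (hc : -1 < c)
    (p : MvPolynomial (Fin 2) ℝ) :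
    IntegrableOn (fun z : ℝ × ℝ => pEval p z.1 z.2 * wt a b c z.1 z.2) Tri :=
  (integrableOn_wt_Tri ha hb hc).continuousOn_mul (continuous_pEval p).continuousOn isCompact_Tri

lemma triIntegral_sub (ha : -1 < a) (hb : -1 < b) (hc : -1 < c) (p q : MvPolynomial (Fin 2) ℝ) :
    triIntegral a b c (p - q) = triIntegral a b c p - triIntegral a b c q := by
  simp only [triIntegral, pEval, map_sub, sub_mul]
  exact integral_sub (integrableOn_pEval_mul_wt ha hb hc p) (integrableOn_pEval_mul_wt ha hb hc q)

lemma triIntegral_add (ha : -1 < a) (hb : -1 < b) (hc : -1 < c) (p q : MvPolynomial (Fin 2) ℝ) :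
    triIntegral a b c (p + q) = triIntegral a b c p + triIntegral a b c q := by
  simp only [triIntegral, pEval, map_add, add_mul]
  exact integral_add (integrableOn_pEval_mul_wt ha hb hc p) (integrableOn_pEval_mul_wt ha hb hc q)

lemma triIntegral_smul (r : ℝ) (p : MvPolynomial (Fin 2) ℝ) :
    triIntegral a b c (r • p) = r * triIntegral a b c p := by
  simp only [triIntegral, pEval, smul_eq_C_mul, map_mul, eval_C, mul_assoc, integral_const_mul]

lemma triIntegral_monomial (ha : -1 < a) (hb : -1 < b) (hc : -1 < c) (s : Fin 2 →₀ ℕ)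
    (r : ℝ) :
    triIntegral a b c (monomial s r) = r * (normConst (a + s 0) (b + s 1) c)⁻¹ := by
  rw [← integral_wt_Tri (by linarith [(s 0).cast_nonneg (α := ℝ)])
    (by linarith [(s 1).cast_nonneg (α := ℝ)]) hc, ← integral_const_mul]
  refine setIntegral_congr_fun measurableSet_Tri fun z ⟨hx, hy, _⟩ => ?_
  rw [pEval_monomial, wt, wt, rpow_add_natCast_of_nonneg hx ha, rpow_add_natCast_of_nonneg hy hb]
  ring

lemma triIntegral_X_zero_mul (ha : -1 < a) (p : MvPolynomial (Fin 2) ℝ) :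
    triIntegral a b c (X 0 * p) = triIntegral (a + 1) b c p := by
  refine setIntegral_congr_fun measurableSet_Tri fun z ⟨hx, _, _⟩ => ?_
  simp only [pEval, map_mul, eval_X, Matrix.cons_val_zero, wt]
  rw [Real.rpow_add_one' hx (by linarith)]
  ring

lemma triIntegral_X_one_mul (hb : -1 < b) (p : MvPolynomial (Fin 2) ℝ) :
    triIntegral a b c (X 1 * p) = triIntegral a (b + 1) c p := by
  refine setIntegral_congr_fun measurableSet_Tri fun z ⟨_, hy, _⟩ => ?_
  simp only [pEval, map_mul, eval_X, Matrix.cons_val_one, Matrix.cons_val_fin_one, wt]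
  rw [Real.rpow_add_one' hy (by linarith)]
  ring

lemma triIntegral_one_sub_X_sub_X_mul (hc : -1 < c) (p : MvPolynomial (Fin 2) ℝ) :
    triIntegral a b c ((1 - X 0 - X 1) * p) = triIntegral a b (c + 1) p := by
  refine setIntegral_congr_fun measurableSet_Tri fun z ⟨_, _, hxy⟩ => ?_
  simp only [pEval, map_mul, map_sub, map_one, eval_X, Matrix.cons_val_zero, Matrix.cons_val_one,
    Matrix.cons_val_fin_one, wt]
  rw [Real.rpow_add_one' (by linarith) (by linarith)]
  ring

end triIntegral

section Recurrences

variable {a b c : ℝ}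

lemma inv_normConst_exchange_ac (ha : a + 1 ≠ 0) (hc : c + 1 ≠ 0) (b : ℝ) :
    (a + 1) * (normConst a b (c + 1))⁻¹ = (c + 1) * (normConst (a + 1) b c)⁻¹ := by
  rw [normConst, normConst, inv_div, inv_div, Real.Gamma_add_one hc, Real.Gamma_add_one ha,
    show a + b + (c + 1) + 3 = a + 1 + b + c + 3 by ring]
  ring

lemma inv_normConst_exchange_bc (hb : b + 1 ≠ 0) (hc : c + 1 ≠ 0) (a : ℝ) :
    (b + 1) * (normConst a b (c + 1))⁻¹ = (c + 1) * (normConst a (b + 1) c)⁻¹ := by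
  rw [normConst, normConst, inv_div, inv_div, Real.Gamma_add_one hc, Real.Gamma_add_one hb,
    show a + b + (c + 1) + 3 = a + (b + 1) + c + 3 by ring]
  ring

lemma inv_normConst_exchange_ab (ha : a + 1 ≠ 0) (hb : b + 1 ≠ 0) (c : ℝ) :
    (b + 1) * (normConst (a + 1) b c)⁻¹ = (a + 1) * (normConst a (b + 1) c)⁻¹ := by
  rw [normConst, normConst, inv_div, inv_div, Real.Gamma_add_one ha, Real.Gamma_add_one hb,
    show a + 1 + b + c + 3 = a + (b + 1) + c + 3 by ring]
  ring

end Recurrences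

section IntegrationByParts

variable {a b c : ℝ}

lemma triIntegral_pderiv_zero (ha : -1 < a) (hb : -1 < b) (hc : -1 < c)
    (h : MvPolynomial (Fin 2) ℝ) :
    triIntegral (a + 1) b (c + 1) (pderiv 0 h)
      = (c + 1) * triIntegral (a + 1) b c h - (a + 1) * triIntegral a b (c + 1) h := by
  have ha' : -1 < a + 1 := by linarith
  have hc' : -1 < c + 1 := by linarith
  induction h using MvPolynomial.induction_on' with
  | monomial s r =>
    have hs : (0 : ℝ) ≤ s 0 := (s 0).cast_nonneg
    rw [← triIntegral_X_zero_mul ha, X_mul_pderiv_monomial, smul_monomial,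
      triIntegral_monomial ha hb hc', triIntegral_monomial ha' hb hc,
      triIntegral_monomial ha hb hc', nsmul_eq_mul, add_right_comm a 1]
    linear_combination r * inv_normConst_exchange_ac (a := a + s 0) (by linarith) (by linarith)
      (b + s 1)
  | add p q hp hq =>
    rw [map_add, triIntegral_add ha' hb hc', triIntegral_add ha' hb hc,
      triIntegral_add ha hb hc', hp, hq]
    ring

lemma triIntegral_pderiv_one (ha : -1 < a) (hb : -1 < b) (hc : -1 < c)
    (h : MvPolynomial (Fin 2) ℝ) :
    triIntegral a (b + 1) (c + 1) (pderiv 1 h)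
      = (c + 1) * triIntegral a (b + 1) c h - (b + 1) * triIntegral a b (c + 1) h := by
  have hb' : -1 < b + 1 := by linarith
  have hc' : -1 < c + 1 := by linarith
  induction h using MvPolynomial.induction_on' with
  | monomial s r =>
    have hs : (0 : ℝ) ≤ s 1 := (s 1).cast_nonneg
    rw [← triIntegral_X_one_mul hb, X_mul_pderiv_monomial, smul_monomial,
      triIntegral_monomial ha hb hc', triIntegral_monomial ha hb' hc,
      triIntegral_monomial ha hb hc', nsmul_eq_mul, add_right_comm b 1]
    linear_combination r * inv_normConst_exchange_bc (b := b + s 1) (by linarith) (by linarith)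
      (a + s 0)
  | add p q hp hq =>
    rw [map_add, triIntegral_add ha hb' hc', triIntegral_add ha hb' hc,
      triIntegral_add ha hb hc', hp, hq]
    ring

lemma triIntegral_pderiv_one_sub_pderiv_zero (ha : -1 < a) (hb : -1 < b) (hc : -1 < c)
    (h : MvPolynomial (Fin 2) ℝ) :
    triIntegral (a + 1) (b + 1) c (pderiv 1 h - pderiv 0 h)
      = (a + 1) * triIntegral a (b + 1) c h - (b + 1) * triIntegral (a + 1) b c h := by
  have ha' : -1 < a + 1 := by linarith
  have hb' : -1 < b + 1 := by linarith
  induction h using MvPolynomial.induction_on' with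
  | monomial s r =>
    have hs₀ : (0 : ℝ) ≤ s 0 := (s 0).cast_nonneg
    have hs₁ : (0 : ℝ) ≤ s 1 := (s 1).cast_nonneg
    rw [triIntegral_sub ha' hb' hc, ← triIntegral_X_one_mul hb,
      ← triIntegral_X_zero_mul (b := b + 1) ha,
      X_mul_pderiv_monomial, X_mul_pderiv_monomial, smul_monomial, smul_monomial,
      triIntegral_monomial ha' hb hc, triIntegral_monomial ha hb' hc,
      triIntegral_monomial ha hb' hc, triIntegral_monomial ha' hb hc, nsmul_eq_mul, nsmul_eq_mul,
      add_right_comm a 1, add_right_comm b 1]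
    linear_combination r * inv_normConst_exchange_ab (a := a + s 0) (b := b + s 1)
      (by linarith) (by linarith) c
  | add p q hp hq =>
    rw [map_add, map_add, add_sub_add_comm, triIntegral_add ha' hb' hc, triIntegral_add ha hb' hc,
      triIntegral_add ha' hb hc, hp, hq]
    ring

end IntegrationByParts

section Degree

variable {σ R : Type*} [CommRing R]

lemma totalDegree_X_mul_pderiv_le (i : σ) (q : MvPolynomial σ R) :
    (X i * pderiv i q).totalDegree ≤ q.totalDegree := by
  classical
  refine totalDegree_le_of_support_subset ?_
  conv_lhs => rw [q.as_sum]
  simp only [map_sum, Finset.mul_sum, X_mul_pderiv_monomial]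
  refine support_sum.trans (Finset.biUnion_subset.2 fun m hm => ?_)
  exact (support_smul.trans support_monomial_subset).trans (Finset.singleton_subset_iff.2 hm)

lemma totalDegree_smul_sub_smul_le_one {p q : MvPolynomial σ R} (hp : p.totalDegree ≤ 1)
    (hq : q.totalDegree ≤ 1) (r s : R) : (r • p - s • q).totalDegree ≤ 1 :=
  (totalDegree_sub _ _).trans
    (max_le ((totalDegree_smul_le _ _).trans hp) ((totalDegree_smul_le _ _).trans hq))

lemma totalDegree_mul_sub_le {m q r : MvPolynomial σ R} (hm : m.totalDegree ≤ 1)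
    (hr : r.totalDegree ≤ q.totalDegree + 1) : (m * q - r).totalDegree ≤ q.totalDegree + 1 :=
  (totalDegree_sub _ _).trans (max_le ((totalDegree_mul m q).trans (by omega)) hr)

lemma totalDegree_mul_le_add_one {p q : MvPolynomial σ R} {d : ℕ} (hp : p.totalDegree ≤ 1)
    (hq : q.totalDegree ≤ d) : (p * q).totalDegree ≤ d + 1 :=
  (totalDegree_mul p q).trans (by omega)

lemma totalDegree_X_le_one [Nontrivial R] (i : σ) : (X i : MvPolynomial σ R).totalDegree ≤ 1 :=
  (totalDegree_X i).le

lemma totalDegree_one_sub_X_sub_X_le [Nontrivial R] (i j : σ) :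
    (1 - X i - X j : MvPolynomial σ R).totalDegree ≤ 1 :=
  (totalDegree_sub _ _).trans (max_le ((totalDegree_sub _ _).trans
    (max_le (totalDegree_one.trans_le zero_le_one) (totalDegree_X_le_one i)))
    (totalDegree_X_le_one j))

end Degree

-- `hD` is an integration by parts and `hρ` relates the two weights; the conclusion exhibits
-- `q ↦ m * q - ρ * D q` as the adjoint of `D`.
lemma map_derivation_mul_eq {R A G : Type*} [CommRing R] [CommRing A] [Algebra R A]
    [AddCommGroup G] (D : Derivation R A A) {I I' : A → G} (m ρ : A)
    (hI : ∀ p q, I (p - q) = I p - I q) (hρ : ∀ p, I' p = I (ρ * p))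
    (hD : ∀ h, I' (D h) = I (m * h)) (P q : A) :
    I' (D P * q) = I (P * (m * q - ρ * D q)) := by
  have hleibniz : D P * q = D (P * q) - P * D q := by
    rw [D.leibniz, smul_eq_mul, smul_eq_mul]
    ring
  calc I' (D P * q) = I (ρ * D (P * q) - P * (ρ * D q)) := by
        rw [hρ, hleibniz]
        congr 1
        ring
    _ = I (m * (P * q)) - I (P * (ρ * D q)) := by rw [hI, ← hρ, hD]
    _ = I (P * (m * q - ρ * D q)) := by
        rw [← hI]
        congr 1
        ring

lemma normConst_ne_zero {a b c : ℝ} (ha : -1 < a) (hb : -1 < b) (hc : -1 < c) :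
    normConst a b c ≠ 0 := by
  have := Real.Gamma_pos_of_pos (show 0 < a + b + c + 3 by linarith)
  have := Real.Gamma_pos_of_pos (show 0 < a + 1 by linarith)
  have := Real.Gamma_pos_of_pos (show 0 < b + 1 by linarith)
  have := Real.Gamma_pos_of_pos (show 0 < c + 1 by linarith)
  unfold normConst
  positivity

section Adjoint

variable {a b c : ℝ}

lemma exists_triIntegral_pderiv_zero_mul_eq (ha : -1 < a) (hb : -1 < b) (hc : -1 < c)
    (P q : MvPolynomial (Fin 2) ℝ) :
    ∃ R : MvPolynomial (Fin 2) ℝ, R.totalDegree ≤ q.totalDegree + 1 ∧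
      triIntegral (a + 1) b (c + 1) (pderiv 0 P * q) = triIntegral a b c (P * R) := by
  have hρ : ∀ p, triIntegral (a + 1) b (c + 1) p
      = triIntegral a b c (X 0 * (1 - X 0 - X 1) * p) := fun p => by
    rw [mul_assoc, triIntegral_X_zero_mul ha, triIntegral_one_sub_X_sub_X_mul hc]
  have hD : ∀ h, triIntegral (a + 1) b (c + 1) (pderiv 0 h)
      = triIntegral a b c (((c + 1) • X 0 - (a + 1) • (1 - X 0 - X 1)) * h) := fun h => by
    rw [triIntegral_pderiv_zero ha hb hc, sub_mul, triIntegral_sub ha hb hc, smul_mul_assoc,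
      smul_mul_assoc, triIntegral_smul, triIntegral_smul, triIntegral_X_zero_mul ha,
      triIntegral_one_sub_X_sub_X_mul hc]
  refine ⟨_, ?_, map_derivation_mul_eq (pderiv 0) _ _ (triIntegral_sub ha hb hc) hρ hD P q⟩
  refine totalDegree_mul_sub_le (totalDegree_smul_sub_smul_le_one (totalDegree_X_le_one 0)
    (totalDegree_one_sub_X_sub_X_le 0 1) _ _) ?_
  rw [mul_assoc, mul_left_comm]
  exact totalDegree_mul_le_add_one (totalDegree_one_sub_X_sub_X_le 0 1)
    (totalDegree_X_mul_pderiv_le 0 q)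

lemma exists_triIntegral_pderiv_one_mul_eq (ha : -1 < a) (hb : -1 < b) (hc : -1 < c)
    (P q : MvPolynomial (Fin 2) ℝ) :
    ∃ R : MvPolynomial (Fin 2) ℝ, R.totalDegree ≤ q.totalDegree + 1 ∧
      triIntegral a (b + 1) (c + 1) (pderiv 1 P * q) = triIntegral a b c (P * R) := by
  have hρ : ∀ p, triIntegral a (b + 1) (c + 1) p
      = triIntegral a b c (X 1 * (1 - X 0 - X 1) * p) := fun p => by
    rw [mul_assoc, triIntegral_X_one_mul hb, triIntegral_one_sub_X_sub_X_mul hc]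
  have hD : ∀ h, triIntegral a (b + 1) (c + 1) (pderiv 1 h)
      = triIntegral a b c (((c + 1) • X 1 - (b + 1) • (1 - X 0 - X 1)) * h) := fun h => by
    rw [triIntegral_pderiv_one ha hb hc, sub_mul, triIntegral_sub ha hb hc, smul_mul_assoc,
      smul_mul_assoc, triIntegral_smul, triIntegral_smul, triIntegral_X_one_mul hb,
      triIntegral_one_sub_X_sub_X_mul hc]
  refine ⟨_, ?_, map_derivation_mul_eq (pderiv 1) _ _ (triIntegral_sub ha hb hc) hρ hD P q⟩
  refine totalDegree_mul_sub_le (totalDegree_smul_sub_smul_le_one (totalDegree_X_le_one 1)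
    (totalDegree_one_sub_X_sub_X_le 0 1) _ _) ?_
  rw [mul_assoc, mul_left_comm]
  exact totalDegree_mul_le_add_one (totalDegree_one_sub_X_sub_X_le 0 1)
    (totalDegree_X_mul_pderiv_le 1 q)

lemma exists_triIntegral_pderiv_one_sub_pderiv_zero_mul_eq (ha : -1 < a) (hb : -1 < b)
    (hc : -1 < c) (P q : MvPolynomial (Fin 2) ℝ) :
    ∃ R : MvPolynomial (Fin 2) ℝ, R.totalDegree ≤ q.totalDegree + 1 ∧
      triIntegral (a + 1) (b + 1) c ((pderiv 1 P - pderiv 0 P) * q)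
        = triIntegral a b c (P * R) := by
  let D : Derivation ℝ (MvPolynomial (Fin 2) ℝ) (MvPolynomial (Fin 2) ℝ) :=
    pderiv 1 - pderiv 0
  have hρ : ∀ p, triIntegral (a + 1) (b + 1) c p
      = triIntegral a b c (X 0 * X 1 * p) := fun p => by
    rw [mul_assoc, triIntegral_X_zero_mul ha, triIntegral_X_one_mul hb]
  have hD : ∀ h, triIntegral (a + 1) (b + 1) c (D h)
      = triIntegral a b c (((a + 1) • X 1 - (b + 1) • X 0) * h) := fun h => by
    rw [Derivation.coe_sub, Pi.sub_apply, triIntegral_pderiv_one_sub_pderiv_zero ha hb hc,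
      sub_mul, triIntegral_sub ha hb hc, smul_mul_assoc, smul_mul_assoc, triIntegral_smul,
      triIntegral_smul, triIntegral_X_zero_mul ha, triIntegral_X_one_mul hb]
  refine ⟨_, ?_, map_derivation_mul_eq D _ _ (triIntegral_sub ha hb hc) hρ hD P q⟩
  refine totalDegree_mul_sub_le (totalDegree_smul_sub_smul_le_one (totalDegree_X_le_one 1)
    (totalDegree_X_le_one 0) _ _) ?_
  have hρD : X 0 * X 1 * D q = X 0 * (X 1 * pderiv 1 q) - X 1 * (X 0 * pderiv 0 q) := by
    rw [Derivation.coe_sub, Pi.sub_apply]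
    ring
  rw [hρD]
  exact (totalDegree_sub _ _).trans (max_le
    (totalDegree_mul_le_add_one (totalDegree_X_le_one 0) (totalDegree_X_mul_pderiv_le 1 q))
    (totalDegree_mul_le_add_one (totalDegree_X_le_one 1) (totalDegree_X_mul_pderiv_le 0 q)))

end Adjoint

theorem derivatives_of_orthogonal_polynomials_general (α β γ : ℝ)
    (hα : -1 < α) (hβ : -1 < β) (hγ : -1 < γ) (n : ℕ) (hn : 2 ≤ n)
    (P : MvPolynomial (Fin 2) ℝ)
    (horth : ∀ q : MvPolynomial (Fin 2) ℝ, q.totalDegree ≤ n - 1 →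
      wInner α β γ (pEval P) (pEval q) = 0) :
    (∀ q : MvPolynomial (Fin 2) ℝ, q.totalDegree ≤ n - 2 →
      wInner (α + 1) β (γ + 1) (pEval (MvPolynomial.pderiv 0 P)) (pEval q) = 0) ∧
    (∀ q : MvPolynomial (Fin 2) ℝ, q.totalDegree ≤ n - 2 →
      wInner α (β + 1) (γ + 1) (pEval (MvPolynomial.pderiv 1 P)) (pEval q) = 0) ∧
    (∀ q : MvPolynomial (Fin 2) ℝ, q.totalDegree ≤ n - 2 →
      wInner (α + 1) (β + 1) γ
        (pEval (MvPolynomial.pderiv 1 P - MvPolynomial.pderiv 0 P)) (pEval q) = 0) := by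
  have hP : ∀ R : MvPolynomial (Fin 2) ℝ, R.totalDegree ≤ n - 1 →
      triIntegral α β γ (P * R) = 0 :=
    fun R hR => (mul_eq_zero.1 ((wInner_pEval α β γ P R).symm.trans (horth R hR))).resolve_left
      (normConst_ne_zero hα hβ hγ)
  have transfer : ∀ {a b c : ℝ} (D : MvPolynomial (Fin 2) ℝ),
      (∀ q, ∃ R : MvPolynomial (Fin 2) ℝ, R.totalDegree ≤ q.totalDegree + 1 ∧
        triIntegral a b c (D * q) = triIntegral α β γ (P * R)) →
      ∀ q : MvPolynomial (Fin 2) ℝ, q.totalDegree ≤ n - 2 →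
        wInner a b c (pEval D) (pEval q) = 0 := by
    intro a b c D hD q hq
    obtain ⟨R, hR, hDR⟩ := hD q
    rw [wInner_pEval, hDR, hP R (by omega), mul_zero]
  exact ⟨transfer _ (exists_triIntegral_pderiv_zero_mul_eq hα hβ hγ P),
    transfer _ (exists_triIntegral_pderiv_one_mul_eq hα hβ hγ P),
    transfer _ (exists_triIntegral_pderiv_one_sub_pderiv_zero_mul_eq hα hβ hγ P)⟩

theorem derivatives_of_orthogonal_polynomials (α β γ : ℝ)
    (hα : -1 < α) (hβ : -1 < β) (hγ : -1 < γ) (n : ℕ) (hn : 2 ≤ n)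
    (P : MvPolynomial (Fin 2) ℝ) (hdeg : P.totalDegree = n)
    (horth : ∀ q : MvPolynomial (Fin 2) ℝ, q.totalDegree ≤ n - 1 →
      wInner α β γ (pEval P) (pEval q) = 0) :
    (∀ q : MvPolynomial (Fin 2) ℝ, q.totalDegree ≤ n - 2 →
      wInner (α + 1) β (γ + 1) (pEval (MvPolynomial.pderiv 0 P)) (pEval q) = 0) ∧
    (∀ q : MvPolynomial (Fin 2) ℝ, q.totalDegree ≤ n - 2 →
      wInner α (β + 1) (γ + 1) (pEval (MvPolynomial.pderiv 1 P)) (pEval q) = 0) ∧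
    (∀ q : MvPolynomial (Fin 2) ℝ, q.totalDegree ≤ n - 2 →
      wInner (α + 1) (β + 1) γ
        (pEval (MvPolynomial.pderiv 1 P - MvPolynomial.pderiv 0 P)) (pEval q) = 0) :=
  derivatives_of_orthogonal_polynomials_general α β γ hα hβ hγ n hn P horth
end
end
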